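/- (Optimal energy-harvesting capacitance, Subsection IV-C.) Define g : (0, ∞) → ℝ by g(c) = (c/2) (1 − e^{−1/c})². Then g attains a global maximum on (0, ∞), and its maximizer c* lies in the interval (0.79, 0.80) (numerically c* ≈ 0.796); that is, there exists c* with 0.79 < c* < 0.80 such that g(c) ≤ g(c*) for all c > 0. -/

import Mathlib

/-!
Writing `u = exp (-1/c)`, the derivative of `g` factors as
`g' c = u (1 - u) / 2 · (exp (1/c) - (1 + 2/c))`, so its sign is that of `φ (1/c)` with
`φ x = exp x - (1 + 2x)`. Since `φ` is convex and vanishes at `0` and at its positive root `x₀`,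
it is `≤ 0` on `[0, x₀]` and `≥ 0` beyond; hence `g` increases up to `c* = 1/x₀` and decreases
after it. Numerical bounds on `exp` place `x₀` in `(5/4, 100/79)`, i.e. `c*` in `(0.79, 0.80)`.
-/

/-- The harvesting efficiency as a function of the normalized capacitance
`c = R_h C_EH / T_h`: `g(c) = (c/2)(1 − e^{−1/c})²`. -/
noncomputable def harvestEff (c : ℝ) : ℝ := (c / 2) * (1 - Real.exp (-1 / c)) ^ 2

open Real Set

theorem isMaxOn_Ioi_of_hasDerivAt {f f' : ℝ → ℝ} {a b : ℝ} (hba : b < a)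
    (hf : ∀ x ∈ Ioi b, HasDerivAt f (f' x) x) (hinc : ∀ x ∈ Ioc b a, 0 ≤ f' x)
    (hdec : ∀ x ∈ Ici a, f' x ≤ 0) : IsMaxOn f (Ioi b) a := by
  have hcont : ContinuousOn f (Ioi b) := fun x hx => (hf x hx).continuousAt.continuousWithinAt
  intro x (hx : b < x)
  rcases le_total x a with hxa | hax
  · refine monotoneOn_of_hasDerivWithinAt_nonneg (f' := f') (convex_Icc x a)
      (hcont.mono fun y hy => hx.trans_le hy.1) (fun y hy => ?_) (fun y hy => ?_)
      ⟨le_rfl, hxa⟩ ⟨hxa, le_rfl⟩ hxa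
    all_goals rw [interior_Icc] at hy
    · exact (hf y (hx.trans hy.1)).hasDerivWithinAt
    · exact hinc y ⟨hx.trans hy.1, hy.2.le⟩
  · refine antitoneOn_of_hasDerivWithinAt_nonpos (f' := f') (convex_Icc a x)
      (hcont.mono fun y hy => hba.trans_le hy.1) (fun y hy => ?_) (fun y hy => ?_)
      ⟨le_rfl, hax⟩ ⟨hax, le_rfl⟩ hax
    all_goals rw [interior_Icc] at hy
    · exact (hf y (hba.trans hy.1)).hasDerivWithinAt
    · exact hdec y hy.1.le

theorem convexOn_exp_sub_one_add_two_mul : ConvexOn ℝ univ (fun x => exp x - (1 + 2 * x)) :=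
  convexOn_exp.sub ((concaveOn_const _ convex_univ).add
    ((concaveOn_id convex_univ).smul zero_le_two))

theorem exp_le_one_add_two_mul_of_le {x₀ x : ℝ} (hx₀ : exp x₀ = 1 + 2 * x₀) (hx : 0 ≤ x)
    (hxx₀ : x ≤ x₀) : exp x ≤ 1 + 2 * x := by
  have := convexOn_exp_sub_one_add_two_mul.le_on_segment (mem_univ 0) (mem_univ x₀)
    (by rw [segment_eq_Icc (hx.trans hxx₀)]; exact ⟨hx, hxx₀⟩)
  simpa [hx₀] using this

theorem one_add_two_mul_le_exp_of_le {x₀ x : ℝ} (h₀ : 0 < x₀) (hx₀ : exp x₀ = 1 + 2 * x₀)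
    (hx₀x : x₀ ≤ x) : 1 + 2 * x ≤ exp x := by
  have := convexOn_exp_sub_one_add_two_mul.le_right_of_left_le'' (mem_univ 0) (mem_univ x)
    h₀ hx₀x (by simp [hx₀])
  simpa [hx₀] using this

theorem exp_five_div_four_lt : exp (5 / 4) < 7 / 2 := by
  have h : exp (5 / 4) ^ 4 = exp 1 ^ 5 := by
    rw [← exp_nat_mul, ← exp_nat_mul]; norm_num
  have : exp 1 ^ 5 < (7 / 2) ^ 4 :=
    (pow_lt_pow_left₀ exp_one_lt_d9 (exp_pos 1).le (by norm_num)).trans (by norm_num)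
  exact lt_of_pow_lt_pow_left₀ 4 (by norm_num) (h ▸ this)

theorem one_add_two_mul_lt_exp_hundred_div_seventy_nine :
    1 + 2 * (100 / 79) < exp (100 / 79) := by
  refine lt_of_lt_of_le ?_ (sum_le_exp_of_nonneg (by norm_num) 6)
  norm_num [Finset.sum_range_succ, Nat.factorial]

theorem exists_exp_eq_one_add_two_mul :
    ∃ x₀ ∈ Ioo (5 / 4 : ℝ) (100 / 79), exp x₀ = 1 + 2 * x₀ := by
  have hcont : ContinuousOn (fun x => exp x - (1 + 2 * x)) (Icc (5 / 4) (100 / 79)) := by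
    fun_prop
  have hsign : (0 : ℝ) ∈
      Ioo (exp (5 / 4) - (1 + 2 * (5 / 4))) (exp (100 / 79) - (1 + 2 * (100 / 79))) :=
    ⟨by linarith [exp_five_div_four_lt],
      by linarith [one_add_two_mul_lt_exp_hundred_div_seventy_nine]⟩
  obtain ⟨x₀, hx₀, hroot⟩ := intermediate_value_Ioo (by norm_num) hcont hsign
  exact ⟨x₀, hx₀, sub_eq_zero.1 hroot⟩

theorem hasDerivAt_harvestEff {c : ℝ} (hc : c ≠ 0) :
    HasDerivAt harvestEff
      (exp (-1 / c) * (1 - exp (-1 / c)) / 2 * (exp (1 / c) - (1 + 2 * (1 / c)))) c := by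
  have hinv : HasDerivAt (fun x : ℝ => -1 / x) (1 / c ^ 2) c := by
    simpa [neg_div] using ((hasDerivAt_id c).inv hc).fun_neg
  have := ((hasDerivAt_id c).div_const 2).mul
    (((hasDerivAt_exp _).comp c hinv).const_sub 1 |>.pow 2)
  refine this.congr_deriv ?_
  have hexp : exp (1 / c) = (exp (-1 / c))⁻¹ := by rw [← exp_neg, neg_div, neg_neg]
  simp only [Pi.pow_apply, Function.comp_apply, id, hexp]
  field_simp
  ring

theorem isMaxOn_harvestEff {x₀ : ℝ} (h₀ : 0 < x₀) (hx₀ : exp x₀ = 1 + 2 * x₀) :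
    IsMaxOn harvestEff (Ioi 0) x₀⁻¹ := by
  have hfactor {c : ℝ} (hc : 0 < c) : 0 ≤ exp (-1 / c) * (1 - exp (-1 / c)) / 2 := by
    have : exp (-1 / c) ≤ 1 :=
      exp_le_one_iff.2 (by rw [neg_div]; exact neg_nonpos.2 (by positivity))
    exact div_nonneg (mul_nonneg (exp_pos _).le (sub_nonneg.2 this)) zero_le_two
  refine isMaxOn_Ioi_of_hasDerivAt (inv_pos.2 h₀) (fun c hc => hasDerivAt_harvestEff hc.ne')
    (fun c ⟨hc, hcx⟩ => ?_) (fun c (hcx : x₀⁻¹ ≤ c) => ?_)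
  · have : x₀ ≤ 1 / c := by rw [one_div]; exact le_inv_of_le_inv₀ hc hcx
    exact mul_nonneg (hfactor hc) (sub_nonneg.2 (one_add_two_mul_le_exp_of_le h₀ hx₀ this))
  · have hc : 0 < c := (inv_pos.2 h₀).trans_le hcx
    have : 1 / c ≤ x₀ := by rw [one_div]; exact inv_le_of_inv_le₀ h₀ hcx
    exact mul_nonpos_of_nonneg_of_nonpos (hfactor hc)
      (sub_nonpos.2 (exp_le_one_add_two_mul_of_le hx₀ (by positivity) this))

/-- Optimal energy-harvesting capacitance (Subsection IV-C): the efficiency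
`g(c) = (c/2)(1 − e^{−1/c})²` attains a global maximum over `c > 0`, and the maximizer
lies in the interval `(0.79, 0.80)` (numerically `c* ≈ 0.796`). -/
theorem harvestEff_max :
    ∃ cstar : ℝ, 0.79 < cstar ∧ cstar < 0.80 ∧
      ∀ c : ℝ, 0 < c → harvestEff c ≤ harvestEff cstar := by
  obtain ⟨x₀, ⟨hlo, hhi⟩, hx₀⟩ := exists_exp_eq_one_add_two_mul
  have h₀ : 0 < x₀ := by linarith
  refine ⟨x₀⁻¹, ?_, ?_, isMaxOn_iff.1 (isMaxOn_harvestEff h₀ hx₀)⟩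
  · rw [lt_inv_comm₀ (by norm_num) h₀]; norm_num; exact hhi
  · rw [inv_lt_comm₀ h₀ (by norm_num)]; norm_num; exact hlo
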